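/- Let Y = {x1, x2, x3, x4} ⊆ Σ^c be a zero-set of size 4 (the four keys XOR to zero as vectors over F_2 position characters) with c ≥ 2. Apply one round of tornado derivation: the new derived character is g(x) = T_1[x[1]] ⊕ ⋯ ⊕ T_c[x[c]] with independent uniform tables T_i : Σ → Σ. Then the probability that {g(x1), g(x2), g(x3), g(x4)} XORs to zero (i.e., Y survives one round) is exactly (3 - 2/|Σ|)/|Σ|. -/
import Mathlib

/-- The indicator vector in `F₂^{[c]×Σ}` of the position characters of a key. -/
def keyVec {c : ℕ} {Alph : Type*} [DecidableEq Alph] (x : Fin c → Alph) :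
    Fin c × Alph → ZMod 2 := fun p => if x p.1 = p.2 then 1 else 0

section Aux

lemma fiber_count {G H : Type*} [AddCommGroup G] [Fintype G] [DecidableEq G]
    [AddCommGroup H] [Fintype H] [DecidableEq H]
    (φ : G →+ H) (hs : Function.Surjective φ) :
    (Finset.univ.filter fun g => φ g = 0).card * Fintype.card H = Fintype.card G := by
  have h1 : ∀ v : H, (Finset.univ.filter fun g => φ g = v).card
      = (Finset.univ.filter fun g => φ g = 0).card := by
    intro v
    obtain ⟨t, ht⟩ := hs v
    refine Finset.card_bij' (fun g _ => g - t) (fun g _ => g + t) ?_ ?_ ?_ ?_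
    · intro g hg
      simp only [Finset.mem_filter, Finset.mem_univ, true_and] at hg ⊢
      rw [map_sub, hg, ht, sub_self]
    · intro g hg
      simp only [Finset.mem_filter, Finset.mem_univ, true_and] at hg ⊢
      rw [map_add, hg, ht, zero_add]
    · intros; simp
    · intros; simp
  have h2 := Finset.card_eq_sum_card_fiberwise
      (f := φ) (s := Finset.univ) (t := Finset.univ) (fun x _ => Finset.mem_univ _)
  simp only [h1, Finset.sum_const, Finset.card_univ, smul_eq_mul] at h2
  rw [mul_comm]
  exact h2.symm

variable {c s : ℕ}

/-- The linear functional on tables given by a coefficient vector `w`. -/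
def Lmap (w : Fin c × (Fin s → ZMod 2) → ZMod 2) :
    (Fin c → (Fin s → ZMod 2) → (Fin s → ZMod 2)) →+ (Fin s → ZMod 2) where
  toFun T := ∑ p : Fin c × (Fin s → ZMod 2), w p • T p.1 p.2
  map_zero' := by simp
  map_add' T T' := by
    simp [Pi.add_apply, smul_add, Finset.sum_add_distrib]

lemma Lmap_keyVec (x : Fin c → (Fin s → ZMod 2))
    (T : Fin c → (Fin s → ZMod 2) → (Fin s → ZMod 2)) :
    Lmap (keyVec x) T = ∑ i, T i (x i) := by
  show (∑ p : Fin c × (Fin s → ZMod 2), keyVec x p • T p.1 p.2) = _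
  rw [Fintype.sum_prod_type]
  refine Finset.sum_congr rfl fun i _ => ?_
  simp [keyVec, ite_smul]

lemma Lmap_add_w (w w' : Fin c × (Fin s → ZMod 2) → ZMod 2)
    (T : Fin c → (Fin s → ZMod 2) → (Fin s → ZMod 2)) :
    Lmap (w + w') T = Lmap w T + Lmap w' T := by
  show (∑ p : Fin c × (Fin s → ZMod 2), (w + w') p • T p.1 p.2) = _
  simp [add_smul, Finset.sum_add_distrib, Lmap]

lemma zmod2_cases : ∀ a : ZMod 2, a = 0 ∨ a = 1 := by decide

/-- compute Lmap on a table of the form z₁•u + z₂•v -/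
lemma Lmap_comb (w z₁ z₂ : Fin c × (Fin s → ZMod 2) → ZMod 2) (u v : Fin s → ZMod 2) :
    Lmap w (fun i α => z₁ (i, α) • u + z₂ (i, α) • v)
      = (∑ p, w p * z₁ p) • u + (∑ p, w p * z₂ p) • v := by
  show (∑ p : Fin c × (Fin s → ZMod 2), w p • (z₁ (p.1, p.2) • u + z₂ (p.1, p.2) • v)) = _
  simp only [Prod.mk.eta, smul_add, smul_smul, Finset.sum_add_distrib, Finset.sum_smul]

lemma exists_dual {P : Type*} [Fintype P] [DecidableEq P]
    (u v : P → ZMod 2) (hu : u ≠ 0) (huv : u ≠ v) :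
    ∃ z : P → ZMod 2, (∑ p, u p * z p) = 1 ∧ (∑ p, v p * z p) = 0 := by
  have hdelta : ∀ (w : P → ZMod 2) (p0 : P),
      (∑ p, w p * (if p = p0 then (1:ZMod 2) else 0)) = w p0 := by
    intro w p0
    simp [mul_ite, Finset.sum_ite_eq']
  obtain ⟨p0, hp0⟩ : ∃ p, u p ≠ v p := by
    by_contra h; push_neg at h; exact huv (funext h)
  obtain ⟨p1, hp1⟩ : ∃ p, u p ≠ 0 := by
    by_contra h; push_neg at h; exact hu (funext h)
  have hu1 : u p1 = 1 := (zmod2_cases (u p1)).resolve_left hp1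
  rcases zmod2_cases (u p0) with h0 | h0
  · have hv0 : v p0 = 1 := by
      rcases zmod2_cases (v p0) with h | h
      · exact absurd (h0.trans h.symm) hp0
      · exact h
    rcases zmod2_cases (v p1) with h1 | h1
    · exact ⟨fun p => if p = p1 then 1 else 0, by rw [hdelta, hu1], by rw [hdelta, h1]⟩
    · refine ⟨fun p => (if p = p0 then 1 else 0) + (if p = p1 then 1 else 0), ?_, ?_⟩
      · simp only [mul_add, Finset.sum_add_distrib, hdelta, h0, hu1, zero_add]
      · simp only [mul_add, Finset.sum_add_distrib, hdelta, hv0, h1]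
        decide
  · have hv0 : v p0 = 0 := by
      rcases zmod2_cases (v p0) with h | h
      · exact h
      · exact absurd (h0.trans h.symm) hp0
    exact ⟨fun p => if p = p0 then 1 else 0, by rw [hdelta, h0], by rw [hdelta, hv0]⟩

lemma Lmap_pair_surj (w w' : Fin c × (Fin s → ZMod 2) → ZMod 2)
    (hw : w ≠ 0) (hw' : w' ≠ 0) (hne : w ≠ w') :
    Function.Surjective ((Lmap (c := c) (s := s) w).prod (Lmap w')) := by
  rintro ⟨a, b⟩
  obtain ⟨z₁, hz11, hz10⟩ := exists_dual w w' hw hne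
  obtain ⟨z₂, hz21, hz20⟩ := exists_dual w' w hw' (Ne.symm hne)
  refine ⟨fun i α => z₁ (i, α) • a + z₂ (i, α) • b, ?_⟩
  have h1 := Lmap_comb w z₁ z₂ a b
  have h2 := Lmap_comb w' z₁ z₂ a b
  rw [hz11, hz20] at h1
  rw [hz10, hz21] at h2
  simp only [AddMonoidHom.prod_apply, h1, h2, one_smul, zero_smul, add_zero, zero_add]

lemma Lmap_surj (w : Fin c × (Fin s → ZMod 2) → ZMod 2) (hw : w ≠ 0) :
    Function.Surjective (Lmap (c := c) (s := s) w) := by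
  intro u
  obtain ⟨p1, hp1⟩ : ∃ p, w p ≠ 0 := by
    by_contra h; push_neg at h; exact hw (funext h)
  have hw1 : w p1 = 1 := (zmod2_cases (w p1)).resolve_left hp1
  refine ⟨fun i α => (fun p => if p = p1 then (1:ZMod 2) else 0) (i, α) • u
    + (fun _ => (0:ZMod 2)) (i, α) • (0 : Fin s → ZMod 2), ?_⟩
  rw [Lmap_comb w (fun p => if p = p1 then (1:ZMod 2) else 0) (fun _ => 0) u 0]
  simp [mul_ite, Finset.sum_ite_eq', hw1]

lemma pi_add_eq_zero_iff {ι : Type*} (f g : ι → ZMod 2) : f + g = 0 ↔ f = g := by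
  have key : ∀ a b : ZMod 2, a + b = 0 ↔ a = b := by decide
  constructor
  · intro h; funext p; exact (key _ _).1 (congrFun h p)
  · intro h; funext p; exact (key _ _).2 (congrFun h p)

lemma keyVec_inj {x y : Fin c → (Fin s → ZMod 2)} (h : keyVec x = keyVec y) : x = y := by
  funext i
  by_contra hne
  have h2 := congrFun h (i, x i)
  change (if x i = x i then (1 : ZMod 2) else 0) = (if y i = x i then 1 else 0) at h2
  rw [if_pos rfl, if_neg (Ne.symm hne)] at h2
  exact one_ne_zero h2

end Aux

set_option maxHeartbeats 1600000 in
/-- A zero-set `{x₁,x₂,x₃,x₄} ⊆ Σ^c` of size 4 survives one round of tornado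
derivation (the four derived characters pair up) with probability exactly
`(3 - 2/|Σ|)/|Σ|`, stated as a counting identity over uniformly random tables. -/
theorem stmt15 {c s : ℕ} (hc : 2 ≤ c)
    (x₁ x₂ x₃ x₄ : Fin c → (Fin s → ZMod 2))
    (hdist : [x₁, x₂, x₃, x₄].Pairwise (· ≠ ·))
    (hzero : keyVec x₁ + keyVec x₂ + keyVec x₃ + keyVec x₄ = 0) :
    (Finset.univ.filter (fun T : Fin c → (Fin s → ZMod 2) → (Fin s → ZMod 2) =>
        ((∑ i, T i (x₁ i)) = (∑ i, T i (x₂ i)) ∧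
            (∑ i, T i (x₃ i)) = (∑ i, T i (x₄ i))) ∨
        ((∑ i, T i (x₁ i)) = (∑ i, T i (x₃ i)) ∧
            (∑ i, T i (x₂ i)) = (∑ i, T i (x₄ i))) ∨
        ((∑ i, T i (x₁ i)) = (∑ i, T i (x₄ i)) ∧
            (∑ i, T i (x₂ i)) = (∑ i, T i (x₃ i))))).card
        * (Fintype.card (Fin s → ZMod 2)) ^ 2
      = (3 * Fintype.card (Fin s → ZMod 2) - 2)
        * Fintype.card (Fin c → (Fin s → ZMod 2) → (Fin s → ZMod 2)) := by
  classical
  -- pairwise distinctness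
  rcases List.pairwise_cons.1 hdist with ⟨h1, hdist'⟩
  rcases List.pairwise_cons.1 hdist' with ⟨h2, hdist''⟩
  rcases List.pairwise_cons.1 hdist'' with ⟨h3, _⟩
  have h12 : x₁ ≠ x₂ := h1 x₂ (by simp)
  have h13 : x₁ ≠ x₃ := h1 x₃ (by simp)
  have h14 : x₁ ≠ x₄ := h1 x₄ (by simp)
  have h23 : x₂ ≠ x₃ := h2 x₃ (by simp)
  have h24 : x₂ ≠ x₄ := h2 x₄ (by simp)
  have h34 : x₃ ≠ x₄ := h3 x₄ (by simp)
  set N := Fintype.card (Fin s → ZMod 2) with hNdef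
  set v12 := keyVec x₁ + keyVec x₂ with hv12def
  set v13 := keyVec x₁ + keyVec x₃ with hv13def
  set v14 := keyVec x₁ + keyVec x₄ with hv14def
  -- vector identities from the zero-set condition
  have hz : ∀ p, keyVec x₁ p + keyVec x₂ p + keyVec x₃ p + keyVec x₄ p = 0 := by
    intro p; exact congrFun hzero p
  have hid34 : keyVec x₃ + keyVec x₄ = v12 := by
    funext p
    have := hz p
    have key : ∀ a b c d : ZMod 2, a + b + c + d = 0 → c + d = a + b := by decide
    exact key _ _ _ _ this
  have hid24 : keyVec x₂ + keyVec x₄ = v13 := by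
    funext p
    have := hz p
    have key : ∀ a b c d : ZMod 2, a + b + c + d = 0 → b + d = a + c := by decide
    exact key _ _ _ _ this
  have hid23 : keyVec x₂ + keyVec x₃ = v14 := by
    funext p
    have := hz p
    have key : ∀ a b c d : ZMod 2, a + b + c + d = 0 → b + c = a + d := by decide
    exact key _ _ _ _ this
  have hid12 : v12 = v13 + v14 := by
    funext p
    have := hz p
    have key : ∀ a b c d : ZMod 2, a + b + c + d = 0 → a + b = (a + c) + (a + d) := by decide
    exact key _ _ _ _ this
  have hid13 : v13 = v12 + v14 := by
    funext p
    have := hz p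
    have key : ∀ a b c d : ZMod 2, a + b + c + d = 0 → a + c = (a + b) + (a + d) := by decide
    exact key _ _ _ _ this
  have hid14 : v14 = v12 + v13 := by
    funext p
    have := hz p
    have key : ∀ a b c d : ZMod 2, a + b + c + d = 0 → a + d = (a + b) + (a + c) := by decide
    exact key _ _ _ _ this
  -- nonzero and distinct
  have hv12ne : v12 ≠ 0 := fun h => h12 (keyVec_inj ((pi_add_eq_zero_iff _ _).1 h))
  have hv13ne : v13 ≠ 0 := fun h => h13 (keyVec_inj ((pi_add_eq_zero_iff _ _).1 h))
  have hv14ne : v14 ≠ 0 := fun h => h14 (keyVec_inj ((pi_add_eq_zero_iff _ _).1 h))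
  have hv1213 : v12 ≠ v13 := fun h => h23 (keyVec_inj (add_left_cancel h))
  -- the three pair events
  have Epair : ∀ (y z : Fin c → (Fin s → ZMod 2)) T,
      ((∑ i, T i (y i)) = (∑ i, T i (z i))) ↔ Lmap (keyVec y + keyVec z) T = 0 := by
    intro y z T
    rw [Lmap_add_w, Lmap_keyVec, Lmap_keyVec, pi_add_eq_zero_iff]
  set A12 := Finset.univ.filter
    (fun T : Fin c → (Fin s → ZMod 2) → (Fin s → ZMod 2) => Lmap v12 T = 0) with hA12def
  set A13 := Finset.univ.filter
    (fun T : Fin c → (Fin s → ZMod 2) → (Fin s → ZMod 2) => Lmap v13 T = 0) with hA13def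
  set A14 := Finset.univ.filter
    (fun T : Fin c → (Fin s → ZMod 2) → (Fin s → ZMod 2) => Lmap v14 T = 0) with hA14def
  set A := Finset.univ.filter
    (fun T : Fin c → (Fin s → ZMod 2) → (Fin s → ZMod 2) =>
      Lmap v12 T = 0 ∧ Lmap v13 T = 0) with hAdef
  have hS : (Finset.univ.filter (fun T : Fin c → (Fin s → ZMod 2) → (Fin s → ZMod 2) =>
        ((∑ i, T i (x₁ i)) = (∑ i, T i (x₂ i)) ∧
            (∑ i, T i (x₃ i)) = (∑ i, T i (x₄ i))) ∨
        ((∑ i, T i (x₁ i)) = (∑ i, T i (x₃ i)) ∧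
            (∑ i, T i (x₂ i)) = (∑ i, T i (x₄ i))) ∨
        ((∑ i, T i (x₁ i)) = (∑ i, T i (x₄ i)) ∧
            (∑ i, T i (x₂ i)) = (∑ i, T i (x₃ i)))))
      = A12 ∪ (A13 ∪ A14) := by
    rw [hA12def, hA13def, hA14def, ← Finset.filter_or, ← Finset.filter_or]
    refine Finset.filter_congr fun T _ => ?_
    rw [Epair x₁ x₂ T, Epair x₃ x₄ T, Epair x₁ x₃ T, Epair x₂ x₄ T, Epair x₁ x₄ T,
      Epair x₂ x₃ T, hid34, hid24, hid23]
    constructor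
    · rintro (⟨h, -⟩ | ⟨h, -⟩ | ⟨h, -⟩)
      exacts [Or.inl h, Or.inr (Or.inl h), Or.inr (Or.inr h)]
    · rintro (h | h | h)
      exacts [Or.inl ⟨h, h⟩, Or.inr (Or.inl ⟨h, h⟩), Or.inr (Or.inr ⟨h, h⟩)]
  -- counting
  have hN : 0 < N := Fintype.card_pos
  have hcardA : A.card * N ^ 2 = Fintype.card (Fin c → (Fin s → ZMod 2) → (Fin s → ZMod 2)) := by
    have hsurj := Lmap_pair_surj v12 v13 hv12ne hv13ne hv1213
    have hfc := fiber_count ((Lmap v12).prod (Lmap v13)) hsurj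
    have hfe : (Finset.univ.filter fun T => ((Lmap v12).prod (Lmap v13)) T = 0) = A := by
      ext T
      simp [hAdef, AddMonoidHom.prod_apply, Prod.ext_iff]
    rw [hfe] at hfc
    rw [← hfc, Fintype.card_prod]
    ring
  have hcard12 : A12.card * N = Fintype.card (Fin c → (Fin s → ZMod 2) → (Fin s → ZMod 2)) :=
    fiber_count (Lmap v12) (Lmap_surj v12 hv12ne)
  have hcard13 : A13.card * N = Fintype.card (Fin c → (Fin s → ZMod 2) → (Fin s → ZMod 2)) :=
    fiber_count (Lmap v13) (Lmap_surj v13 hv13ne)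
  have hcard14 : A14.card * N = Fintype.card (Fin c → (Fin s → ZMod 2) → (Fin s → ZMod 2)) :=
    fiber_count (Lmap v14) (Lmap_surj v14 hv14ne)
  have hm12 : A12.card = A.card * N := by
    refine Nat.eq_of_mul_eq_mul_right hN ?_
    rw [hcard12, ← hcardA]; ring
  have hm13 : A13.card = A.card * N := by
    refine Nat.eq_of_mul_eq_mul_right hN ?_
    rw [hcard13, ← hcardA]; ring
  have hm14 : A14.card = A.card * N := by
    refine Nat.eq_of_mul_eq_mul_right hN ?_
    rw [hcard14, ← hcardA]; ring
  -- intersections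
  have hI1 : A13 ∩ A14 = A := by
    ext T
    simp only [hA13def, hA14def, hAdef, Finset.mem_inter, Finset.mem_filter, Finset.mem_univ,
      true_and]
    constructor
    · rintro ⟨ha, hb⟩
      refine ⟨?_, ha⟩
      rw [hid12, Lmap_add_w, ha, hb, add_zero]
    · rintro ⟨ha, hb⟩
      refine ⟨hb, ?_⟩
      rw [hid14, Lmap_add_w, ha, hb, add_zero]
  have hI2 : A12 ∩ (A13 ∪ A14) = A := by
    ext T
    simp only [hA12def, hA13def, hA14def, hAdef, Finset.mem_inter, Finset.mem_union,
      Finset.mem_filter, Finset.mem_univ, true_and]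
    constructor
    · rintro ⟨ha, hb | hb⟩
      · exact ⟨ha, hb⟩
      · refine ⟨ha, ?_⟩
        rw [hid13, Lmap_add_w, ha, hb, add_zero]
    · rintro ⟨ha, hb⟩
      exact ⟨ha, Or.inl hb⟩
  have hu1 := Finset.card_union_add_card_inter A13 A14
  have hu2 := Finset.card_union_add_card_inter A12 (A13 ∪ A14)
  rw [hI1] at hu1
  rw [hI2] at hu2
  rw [hS]
  -- arithmetic finish
  have hcount : (A12 ∪ (A13 ∪ A14)).card = (3 * N - 2) * A.card := by
    rw [Nat.sub_mul]
    have h2a : A.card ≤ A.card * N := Nat.le_mul_of_pos_right _ hN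
    have hm : 3 * N * A.card = 3 * (A.card * N) := by ring
    omega
  rw [hcount, ← hcardA]
  ring
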